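/- arXiv:0911.2863 — 3 statements merged into one kernel-verified Lean document; each statement's English description precedes it below -/
import Mathlib

section
/- In a boolean inverse monoid, if s and t are compatible (s⁻¹t and st⁻¹ idempotent) then the join s ∨ t exists. Consequently every finite nonempty pairwise compatible subset has a join. -/
section Defs
variable {S : Type*}

/-- An idempotent element. -/
def IsIdem [Mul S] (e : S) : Prop := e * e = e

/-- The natural partial order on an inverse semigroup: `s ≤ t` iff `s = t * e`
for some idempotent `e`. -/
def nle [Mul S] (s t : S) : Prop := ∃ e : S, IsIdem e ∧ s = t * e

/-- `m` is the meet (greatest lower bound) of `s` and `t` for the natural partial order. -/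
def IsMeet [Mul S] (s t m : S) : Prop :=
  nle m s ∧ nle m t ∧ ∀ u : S, nle u s → nle u t → nle u m

/-- `j` is the join (least upper bound) of `s` and `t` for the natural partial order. -/
def IsJoin [Mul S] (s t j : S) : Prop :=
  nle s j ∧ nle t j ∧ ∀ u : S, nle s u → nle t u → nle j u

/-- Compatible elements: `s⁻¹ * t` and `s * t⁻¹` are idempotents. -/
def Compatible [Mul S] [Inv S] (s t : S) : Prop :=
  IsIdem (s⁻¹ * t) ∧ IsIdem (s * t⁻¹)

/-- Orthogonal elements: `s⁻¹ * t = 0` and `s * t⁻¹ = 0`. -/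
def Orthogonal [Mul S] [Inv S] [Zero S] (s t : S) : Prop :=
  s⁻¹ * t = 0 ∧ s * t⁻¹ = 0

/-- A filter: a nonempty, upwardly closed, down-directed subset. -/
def IsFilter' [Mul S] (F : Set S) : Prop :=
  F.Nonempty ∧ (∀ s t : S, s ∈ F → nle s t → t ∈ F) ∧
    (∀ s t : S, s ∈ F → t ∈ F → ∃ u ∈ F, nle u s ∧ nle u t)

/-- A proper filter: a filter not containing `0`. -/
def IsProperFilter [Mul S] [Zero S] (F : Set S) : Prop :=
  IsFilter' F ∧ (0 : S) ∉ F

/-- An ultrafilter: a proper filter maximal among proper filters. -/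
def IsUltrafilter' [Mul S] [Zero S] (F : Set S) : Prop :=
  IsProperFilter F ∧ ∀ G : Set S, IsProperFilter G → F ⊆ G → G = F

/-- Upward closure of a subset with respect to the natural partial order. -/
def upClosure [Mul S] (X : Set S) : Set S := {s | ∃ x ∈ X, nle x s}

end Defs

/-- An inverse semigroup: every element `a` has a unique inverse `a⁻¹`. -/
class InverseSemigroup (S : Type*) extends Semigroup S, Inv S where
  mul_inv_mul : ∀ a : S, a * a⁻¹ * a = a
  inv_mul_inv : ∀ a : S, a⁻¹ * a * a⁻¹ = a⁻¹
  inv_unique : ∀ a b : S, a * b * a = a → b * a * b = b → b = a⁻¹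

/-- An inverse monoid: an inverse semigroup with an identity. -/
class InverseMonoid (S : Type*) extends Monoid S, Inv S where
  mul_inv_mul : ∀ a : S, a * a⁻¹ * a = a
  inv_mul_inv : ∀ a : S, a⁻¹ * a * a⁻¹ = a⁻¹
  inv_unique : ∀ a b : S, a * b * a = a → b * a * b = b → b = a⁻¹

/-- A boolean inverse monoid: an inverse monoid with zero such that
(BM1) the idempotents form a boolean algebra under the natural partial order,
(BM2) the natural partial order is a meet semilattice, and
(BM3) orthogonal pairs of elements have joins. -/
class BooleanInverseMonoid (S : Type*) extends Monoid S, Inv S, Zero S where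
  zero_mul : ∀ a : S, 0 * a = 0
  mul_zero : ∀ a : S, a * 0 = 0
  mul_inv_mul : ∀ a : S, a * a⁻¹ * a = a
  inv_mul_inv : ∀ a : S, a⁻¹ * a * a⁻¹ = a⁻¹
  inv_unique : ∀ a b : S, a * b * a = a → b * a * b = b → b = a⁻¹
  meet_exists : ∀ s t : S, ∃ m : S, IsMeet s t m
  idem_join : ∀ e f : S, IsIdem e → IsIdem f → ∃ g : S, IsIdem g ∧ IsJoin e f g
  idem_compl : ∀ e : S, IsIdem e → ∃ e' : S, IsIdem e' ∧ e * e' = 0 ∧ IsJoin e e' 1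
  idem_distrib : ∀ e f g j : S, IsIdem e → IsIdem f → IsIdem g → IsJoin f g j →
    IsJoin (e * f) (e * g) (e * j)
  orthogonal_join : ∀ s t : S, s⁻¹ * t = 0 → s * t⁻¹ = 0 → ∃ j : S, IsJoin s t j

namespace BIMAux
variable {S : Type*} [BooleanInverseMonoid S]

lemma mim (a : S) : a * a⁻¹ * a = a := BooleanInverseMonoid.mul_inv_mul a
lemma imi (a : S) : a⁻¹ * a * a⁻¹ = a⁻¹ := BooleanInverseMonoid.inv_mul_inv a
lemma inv_uniq {a b : S} (h1 : a * b * a = a) (h2 : b * a * b = b) : b = a⁻¹ :=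
  BooleanInverseMonoid.inv_unique a b h1 h2

lemma mim' (a : S) : a * (a⁻¹ * a) = a := by rw [← mul_assoc]; exact mim a
lemma imi' (a : S) : a⁻¹ * (a * a⁻¹) = a⁻¹ := by rw [← mul_assoc]; exact imi a
lemma mim_ap (t x : S) : t * (t⁻¹ * (t * x)) = t * x := by
  rw [← mul_assoc, ← mul_assoc, mim]
lemma imi_ap (t x : S) : t⁻¹ * (t * (t⁻¹ * x)) = t⁻¹ * x := by
  rw [← mul_assoc, ← mul_assoc, imi]

lemma inv_inv' (a : S) : a⁻¹⁻¹ = a := (inv_uniq (imi a) (mim a)).symm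
lemma idem_inv {e : S} (he : IsIdem e) : e⁻¹ = e :=
  (inv_uniq (by rw [he, he]) (by rw [he, he])).symm
lemma idem_dd (a : S) : IsIdem (a⁻¹ * a) := by
  unfold IsIdem; rw [mul_assoc, mim']
lemma idem_rr (a : S) : IsIdem (a * a⁻¹) := by
  unfold IsIdem; rw [mul_assoc, imi']
lemma idem_cancel {e : S} (he : IsIdem e) (x : S) : e * (e * x) = e * x := by
  rw [← mul_assoc, he]

lemma idem_mul_aux {e f : S} (he : IsIdem e) (hf : IsIdem f) :
    IsIdem (e * f) ∧ e * f = (e * f)⁻¹ := by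
  set x := (e * f)⁻¹ with hx
  have h1 := mim (e * f)
  have h2 := imi (e * f)
  have hy : f * x * e = x := by
    refine inv_uniq ?_ ?_
    · calc e * f * (f * x * e) * (e * f) = e * (f * (f * (x * (e * (e * f))))) := by
            simp only [mul_assoc]
        _ = e * (f * (x * (e * f))) := by rw [idem_cancel hf, idem_cancel he]
        _ = e * f := by simpa only [mul_assoc] using h1
    · calc f * x * e * (e * f) * (f * x * e)
          = f * (x * (e * (e * (f * (f * (x * e)))))) := by simp only [mul_assoc]
        _ = f * (x * (e * (f * (x * e)))) := by rw [idem_cancel he, idem_cancel hf]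
        _ = f * (x * e) := by
            have := congrArg (fun z => f * (z * e)) h2
            simpa only [mul_assoc] using this
        _ = f * x * e := by rw [mul_assoc]
  have hxi : IsIdem x := by
    unfold IsIdem
    rw [← hy]
    calc f * x * e * (f * x * e) = f * (x * (e * (f * (x * e)))) := by
          simp only [mul_assoc]
      _ = f * (x * e) := by
          have := congrArg (fun z => f * (z * e)) h2
          simpa only [mul_assoc] using this
      _ = f * x * e := by rw [mul_assoc]
  have hef : e * f = x := by
    calc e * f = ((e * f)⁻¹)⁻¹ := (inv_inv' _).symm
      _ = (e * f)⁻¹ := idem_inv hxi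
  exact ⟨by rw [hef]; exact hxi, hef⟩

lemma idem_mul {e f : S} (he : IsIdem e) (hf : IsIdem f) : IsIdem (e * f) :=
  (idem_mul_aux he hf).1

lemma idem_comm {e f : S} (he : IsIdem e) (hf : IsIdem f) : e * f = f * e := by
  have hef := idem_mul he hf
  have hfe := idem_mul hf he
  have : f * e = (e * f)⁻¹ := by
    refine inv_uniq ?_ ?_
    · calc e * f * (f * e) * (e * f) = e * (f * (f * (e * (e * f)))) := by
            simp only [mul_assoc]
        _ = e * (f * (e * f)) := by rw [idem_cancel hf, idem_cancel he]
        _ = e * f * (e * f) := by simp only [mul_assoc]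
        _ = e * f := hef
    · calc f * e * (e * f) * (f * e) = f * (e * (e * (f * (f * e)))) := by
            simp only [mul_assoc]
        _ = f * (e * (f * e)) := by rw [idem_cancel he, idem_cancel hf]
        _ = f * e * (f * e) := by simp only [mul_assoc]
        _ = f * e := hfe
  rw [this, ← (idem_mul_aux he hf).2]

lemma mul_inv_rev' (a b : S) : (a * b)⁻¹ = b⁻¹ * a⁻¹ := by
  symm
  refine inv_uniq ?_ ?_
  · calc a * b * (b⁻¹ * a⁻¹) * (a * b) = a * ((b * b⁻¹) * (a⁻¹ * a)) * b := by
          simp only [mul_assoc]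
      _ = a * ((a⁻¹ * a) * (b * b⁻¹)) * b := by rw [idem_comm (idem_rr b) (idem_dd a)]
      _ = a * (a⁻¹ * a) * (b * (b⁻¹ * b)) := by simp only [mul_assoc]
      _ = a * b := by rw [mim', mim']
  · calc b⁻¹ * a⁻¹ * (a * b) * (b⁻¹ * a⁻¹)
        = b⁻¹ * ((a⁻¹ * a) * (b * b⁻¹)) * a⁻¹ := by simp only [mul_assoc]
      _ = b⁻¹ * ((b * b⁻¹) * (a⁻¹ * a)) * a⁻¹ := by rw [idem_comm (idem_dd a) (idem_rr b)]
      _ = b⁻¹ * (b * b⁻¹) * (a⁻¹ * (a * a⁻¹)) := by simp only [mul_assoc]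
      _ = b⁻¹ * a⁻¹ := by rw [imi', imi']

lemma idem_conj {e : S} (he : IsIdem e) (c : S) : IsIdem (c⁻¹ * (e * c)) := by
  unfold IsIdem
  calc c⁻¹ * (e * c) * (c⁻¹ * (e * c)) = c⁻¹ * (e * (c * c⁻¹)) * (e * c) := by
        simp only [mul_assoc]
    _ = c⁻¹ * ((c * c⁻¹) * e) * (e * c) := by rw [idem_comm he (idem_rr c)]
    _ = c⁻¹ * (c * c⁻¹) * (e * (e * c)) := by simp only [mul_assoc]
    _ = c⁻¹ * (e * c) := by rw [imi', idem_cancel he]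

lemma nle_refl (a : S) : nle a a := ⟨a⁻¹ * a, idem_dd a, (mim' a).symm⟩

lemma nle_def {s t : S} (h : nle s t) : s = t * (s⁻¹ * s) := by
  obtain ⟨e, he, rfl⟩ := h
  calc t * e = t * (t⁻¹ * (t * (e * e))) := by rw [he, mim_ap]
    _ = t * (((t⁻¹ * t) * e) * e) := by simp only [mul_assoc]
    _ = t * ((e * (t⁻¹ * t)) * e) := by rw [idem_comm (idem_dd t) he]
    _ = t * (e * (t⁻¹ * (t * e))) := by simp only [mul_assoc]
    _ = t * ((t * e)⁻¹ * (t * e)) := by rw [mul_inv_rev', idem_inv he, mul_assoc]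

lemma nle_trans {x y z : S} (h1 : nle x y) (h2 : nle y z) : nle x z := by
  obtain ⟨e, he, rfl⟩ := h1
  obtain ⟨f, hf, rfl⟩ := h2
  exact ⟨f * e, idem_mul hf he, mul_assoc z f e⟩

lemma nle_d {x y : S} (h : nle x y) : nle (x⁻¹ * x) (y⁻¹ * y) := by
  obtain ⟨e, he, rfl⟩ := h
  have hD : (y * e)⁻¹ * (y * e) = (y⁻¹ * y) * e := by
    calc (y * e)⁻¹ * (y * e) = e * (y⁻¹ * y) * e := by
          rw [mul_inv_rev', idem_inv he]; simp only [mul_assoc]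
      _ = (y⁻¹ * y) * (e * e) := by rw [idem_comm he (idem_dd y), mul_assoc]
      _ = (y⁻¹ * y) * e := by rw [he]
  exact ⟨(y * e)⁻¹ * (y * e), idem_dd _, by rw [hD, idem_cancel (idem_dd y)]⟩

lemma nle_idem_eq {e f : S} (he : IsIdem e) (h : nle e f) : e = f * e := by
  have h1 := nle_def h
  rwa [idem_inv he, he] at h1

lemma nle_antisymm {x y : S} (h1 : nle x y) (h2 : nle y x) : x = y := by
  have e1 := nle_def h1
  have e2 := nle_def h2
  have hd : x⁻¹ * x = y⁻¹ * y := by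
    have d1 := nle_idem_eq (idem_dd x) (nle_d h1)
    have d2 := nle_idem_eq (idem_dd y) (nle_d h2)
    rw [d1, idem_comm (idem_dd y) (idem_dd x), ← d2]
  rw [e1, hd, mim']

lemma nle_mul_left (c : S) {x y : S} (h : nle x y) : nle (c * x) (c * y) := by
  obtain ⟨e, he, rfl⟩ := h
  exact ⟨e, he, (mul_assoc c y e).symm⟩

lemma nle_mul_right (c : S) {x y : S} (h : nle x y) : nle (x * c) (y * c) := by
  obtain ⟨e, he, rfl⟩ := h
  refine ⟨c⁻¹ * (e * c), idem_conj he c, ?_⟩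
  symm
  calc y * c * (c⁻¹ * (e * c)) = y * ((c * c⁻¹) * e) * c := by simp only [mul_assoc]
    _ = y * (e * (c * c⁻¹)) * c := by rw [idem_comm (idem_rr c) he]
    _ = y * e * (c * (c⁻¹ * c)) := by simp only [mul_assoc]
    _ = y * e * c := by rw [mim']

lemma nle_inv {x y : S} (h : nle x y) : nle x⁻¹ y⁻¹ := by
  obtain ⟨e, he, rfl⟩ := h
  refine ⟨y * (e * y⁻¹), ?_, ?_⟩
  · have := idem_conj he y⁻¹
    rwa [inv_inv'] at this
  · rw [mul_inv_rev', idem_inv he]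
    calc e * y⁻¹ = e * (y⁻¹ * y * y⁻¹) := by rw [imi]
      _ = (e * (y⁻¹ * y)) * y⁻¹ := by simp only [mul_assoc]
      _ = ((y⁻¹ * y) * e) * y⁻¹ := by rw [idem_comm he (idem_dd y)]
      _ = y⁻¹ * (y * (e * y⁻¹)) := by simp only [mul_assoc]

lemma nle_idem_left {e : S} (he : IsIdem e) (u : S) : nle (e * u) u := by
  refine ⟨u⁻¹ * (e * u), idem_conj he u, ?_⟩
  calc e * u = e * (u * (u⁻¹ * u)) := by rw [mim']
    _ = (e * (u * u⁻¹)) * u := by simp only [mul_assoc]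
    _ = ((u * u⁻¹) * e) * u := by rw [idem_comm he (idem_rr u)]
    _ = u * (u⁻¹ * (e * u)) := by simp only [mul_assoc]

lemma idem_of_nle_one {x : S} (h : nle x 1) : IsIdem x := by
  obtain ⟨e, he, rfl⟩ := h
  rwa [one_mul]

lemma nle_one {e : S} (he : IsIdem e) : nle e 1 := ⟨e, he, (one_mul e).symm⟩

lemma d_mul_idem {e : S} (he : IsIdem e) (a : S) :
    (a * e)⁻¹ * (a * e) = (a⁻¹ * a) * e := by
  calc (a * e)⁻¹ * (a * e) = e * (a⁻¹ * a) * e := by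
        rw [mul_inv_rev', idem_inv he]; simp only [mul_assoc]
    _ = (a⁻¹ * a) * (e * e) := by rw [idem_comm he (idem_dd a), mul_assoc]
    _ = (a⁻¹ * a) * e := by rw [he]

lemma join_unique {x y w w' : S} (h : IsJoin x y w) (h' : IsJoin x y w') : w = w' :=
  nle_antisymm (h.2.2 w' h'.1 h'.2.1) (h'.2.2 w h.1 h.2.1)

lemma join_d {x y w : S} (h : IsJoin x y w) :
    IsJoin (x⁻¹ * x) (y⁻¹ * y) (w⁻¹ * w) := by
  obtain ⟨hx, hy, hub⟩ := h
  refine ⟨nle_d hx, nle_d hy, ?_⟩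
  intro u hxu hyu
  obtain ⟨u₀, hm1, hm2, hm3⟩ := BooleanInverseMonoid.meet_exists u (1 : S)
  have hu₀ : IsIdem u₀ := idem_of_nle_one hm2
  have hxu₀ : nle (x⁻¹ * x) u₀ := hm3 _ hxu (nle_one (idem_dd x))
  have hyu₀ : nle (y⁻¹ * y) u₀ := hm3 _ hyu (nle_one (idem_dd y))
  have hx' : nle x (w * u₀) := by
    refine ⟨x⁻¹ * x, idem_dd x, ?_⟩
    calc x = w * (x⁻¹ * x) := nle_def hx
      _ = w * (u₀ * (x⁻¹ * x)) := by rw [← nle_idem_eq (idem_dd x) hxu₀]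
      _ = w * u₀ * (x⁻¹ * x) := by rw [mul_assoc]
  have hy' : nle y (w * u₀) := by
    refine ⟨y⁻¹ * y, idem_dd y, ?_⟩
    calc y = w * (y⁻¹ * y) := nle_def hy
      _ = w * (u₀ * (y⁻¹ * y)) := by rw [← nle_idem_eq (idem_dd y) hyu₀]
      _ = w * u₀ * (y⁻¹ * y) := by rw [mul_assoc]
  have hw : w = w * u₀ := nle_antisymm (hub _ hx' hy') ⟨u₀, hu₀, rfl⟩
  have hdwu : nle (w⁻¹ * w) u₀ := by
    refine ⟨(w⁻¹ * w) * u₀, idem_mul (idem_dd w) hu₀, ?_⟩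
    conv_lhs => rw [hw]
    rw [mul_inv_rev', idem_inv hu₀]
    simp only [mul_assoc]
  exact nle_trans hdwu hm1

lemma restrict_eq {a b e f g : S} (he : IsIdem e) (hf : IsIdem f) (hg : IsIdem g)
    (hj : IsJoin e f g) (hae : a * e = b * e) (haf : a * f = b * f) :
    a * g = b * g := by
  have heg : e = g * e := nle_idem_eq he hj.1
  have hfg : f = g * f := nle_idem_eq hf hj.2.1
  obtain ⟨m, hm1, hm2, hm3⟩ := BooleanInverseMonoid.meet_exists (a * g) (b * g)
  have hag : ∀ c : S, c * g * ((c⁻¹ * c) * g) = c * g := by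
    intro c
    calc c * g * ((c⁻¹ * c) * g) = c * (g * (c⁻¹ * c)) * g := by simp only [mul_assoc]
      _ = c * ((c⁻¹ * c) * g) * g := by rw [idem_comm hg (idem_dd c)]
      _ = c * (c⁻¹ * (c * (g * g))) := by simp only [mul_assoc]
      _ = c * g := by rw [hg, mim_ap]
  have main : ∀ c : S, nle m (c * g) → nle (c * e) m → nle (c * f) m → m = c * g := by
    intro c hmcg h1 h2
    have hdist := BooleanInverseMonoid.idem_distrib (c⁻¹ * c) e f g (idem_dd c) he hf hj
    have hde : nle ((c⁻¹ * c) * e) (m⁻¹ * m) := by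
      have := nle_d h1; rwa [d_mul_idem he c] at this
    have hdf : nle ((c⁻¹ * c) * f) (m⁻¹ * m) := by
      have := nle_d h2; rwa [d_mul_idem hf c] at this
    have hup : nle ((c⁻¹ * c) * g) (m⁻¹ * m) := hdist.2.2 _ hde hdf
    have hdown : nle (m⁻¹ * m) ((c⁻¹ * c) * g) := by
      have := nle_d hmcg; rwa [d_mul_idem hg c] at this
    have hdm : m⁻¹ * m = (c⁻¹ * c) * g := nle_antisymm hdown hup
    calc m = (c * g) * (m⁻¹ * m) := nle_def hmcg
      _ = c * g * ((c⁻¹ * c) * g) := by rw [hdm]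
      _ = c * g := hag c
  have h1a : nle (a * e) (a * g) := ⟨e, he, by conv_lhs => rw [heg, ← mul_assoc]⟩
  have h1b : nle (a * e) (b * g) := by
    rw [hae]; exact ⟨e, he, by conv_lhs => rw [heg, ← mul_assoc]⟩
  have h2a : nle (a * f) (a * g) := ⟨f, hf, by conv_lhs => rw [hfg, ← mul_assoc]⟩
  have h2b : nle (a * f) (b * g) := by
    rw [haf]; exact ⟨f, hf, by conv_lhs => rw [hfg, ← mul_assoc]⟩
  have hma := main a hm1 (hm3 _ h1a h1b) (hm3 _ h2a h2b)
  have hmb := main b hm2 (hae ▸ hm3 _ h1a h1b) (haf ▸ hm3 _ h2a h2b)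
  rw [← hma, ← hmb]

lemma join_mul_idem_left {e x y w : S} (he : IsIdem e) (h : IsJoin x y w) :
    IsJoin (e * x) (e * y) (e * w) := by
  obtain ⟨hx, hy, hub⟩ := h
  refine ⟨nle_mul_left e hx, nle_mul_left e hy, ?_⟩
  intro u hxu hyu
  set g := w⁻¹ * (e * w) with hgdef
  have hg : IsIdem g := idem_conj he w
  have hew : e * w = w * g := by
    symm
    calc w * g = w * w⁻¹ * e * w := by rw [hgdef]; simp only [mul_assoc]
      _ = e * (w * w⁻¹) * w := by rw [idem_comm (idem_rr w) he]
      _ = e * (w * (w⁻¹ * w)) := by simp only [mul_assoc]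
      _ = e * w := by rw [mim']
  have hgw : g * (w⁻¹ * w) = g := by
    calc g * (w⁻¹ * w) = w⁻¹ * (e * (w * (w⁻¹ * w))) := by
          rw [hgdef]; simp only [mul_assoc]
      _ = g := by rw [mim', hgdef]
  have hwg : (w⁻¹ * w) * g = g := by
    rw [idem_comm (idem_dd w) hg, hgw]
  have hdj : IsJoin (x⁻¹ * x) (y⁻¹ * y) (w⁻¹ * w) := join_d ⟨hx, hy, hub⟩
  have hdist := BooleanInverseMonoid.idem_distrib g _ _ _ hg (idem_dd x) (idem_dd y) hdj
  rw [hgw] at hdist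
  have hwgx : (w⁻¹ * w) * (g * (x⁻¹ * x)) = g * (x⁻¹ * x) := by
    rw [← mul_assoc, hwg]
  have hwgy : (w⁻¹ * w) * (g * (y⁻¹ * y)) = g * (y⁻¹ * y) := by
    rw [← mul_assoc, hwg]
  have hex : e * x = w * (g * (x⁻¹ * x)) := by
    calc e * x = e * (w * (x⁻¹ * x)) := by rw [← nle_def hx]
      _ = (e * w) * (x⁻¹ * x) := by rw [mul_assoc]
      _ = w * g * (x⁻¹ * x) := by rw [hew]
      _ = w * (g * (x⁻¹ * x)) := mul_assoc _ _ _
  have hey : e * y = w * (g * (y⁻¹ * y)) := by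
    calc e * y = e * (w * (y⁻¹ * y)) := by rw [← nle_def hy]
      _ = (e * w) * (y⁻¹ * y) := by rw [mul_assoc]
      _ = w * g * (y⁻¹ * y) := by rw [hew]
      _ = w * (g * (y⁻¹ * y)) := mul_assoc _ _ _
  have hux : u * (g * (x⁻¹ * x)) = w * (g * (x⁻¹ * x)) := by
    have h0 := nle_def hxu
    rw [hex] at h0
    rw [d_mul_idem (idem_mul hg (idem_dd x)) w, hwgx] at h0
    exact h0.symm
  have huy : u * (g * (y⁻¹ * y)) = w * (g * (y⁻¹ * y)) := by
    have h0 := nle_def hyu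
    rw [hey] at h0
    rw [d_mul_idem (idem_mul hg (idem_dd y)) w, hwgy] at h0
    exact h0.symm
  have hkey := restrict_eq (idem_mul hg (idem_dd x)) (idem_mul hg (idem_dd y)) hg
    hdist hux huy
  rw [hew, ← hkey]
  exact ⟨g, hg, rfl⟩

lemma join_mul_left (c : S) {x y w : S} (h : IsJoin x y w) :
    IsJoin (c * x) (c * y) (c * w) := by
  refine ⟨nle_mul_left c h.1, nle_mul_left c h.2.1, ?_⟩
  intro u hxu hyu
  have hE := join_mul_idem_left (idem_dd c) h
  have h1 : nle ((c⁻¹ * c) * x) (c⁻¹ * u) := by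
    have := nle_mul_left c⁻¹ hxu
    rwa [← mul_assoc] at this
  have h2 : nle ((c⁻¹ * c) * y) (c⁻¹ * u) := by
    have := nle_mul_left c⁻¹ hyu
    rwa [← mul_assoc] at this
  have h3 : nle ((c⁻¹ * c) * w) (c⁻¹ * u) := hE.2.2 _ h1 h2
  have h4 := nle_mul_left c h3
  rw [show c * ((c⁻¹ * c) * w) = c * w from by
    simp only [mul_assoc]; rw [mim_ap]] at h4
  refine nle_trans h4 ?_
  rw [← mul_assoc]
  exact nle_idem_left (idem_rr c) u

lemma join_inv {x y w : S} (h : IsJoin x y w) : IsJoin x⁻¹ y⁻¹ w⁻¹ := by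
  refine ⟨nle_inv h.1, nle_inv h.2.1, ?_⟩
  intro u h1 h2
  have h1' : nle x u⁻¹ := by have := nle_inv h1; rwa [inv_inv'] at this
  have h2' : nle y u⁻¹ := by have := nle_inv h2; rwa [inv_inv'] at this
  have := nle_inv (h.2.2 u⁻¹ h1' h2')
  rwa [inv_inv'] at this

lemma join_idem {e f w : S} (he : IsIdem e) (hf : IsIdem f) (h : IsJoin e f w) :
    IsIdem w := by
  have hd := join_d h
  rw [idem_inv he, idem_inv hf, show e * e = e from he, show f * f = f from hf] at hd
  rw [join_unique h hd]
  exact idem_dd w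

lemma compat_join {s t : S} (hc : Compatible s t) :
    ∃ j : S, IsJoin s t j ∧
      ∀ c : S, Compatible c s → Compatible c t → Compatible c j := by
  obtain ⟨h1, h2⟩ := hc
  have hts : t⁻¹ * s = s⁻¹ * t := by
    calc t⁻¹ * s = t⁻¹ * s⁻¹⁻¹ := by rw [inv_inv']
      _ = (s⁻¹ * t)⁻¹ := (mul_inv_rev' _ _).symm
      _ = s⁻¹ * t := idem_inv h1
  have hst : t * s⁻¹ = s * t⁻¹ := by
    calc t * s⁻¹ = t⁻¹⁻¹ * s⁻¹ := by rw [inv_inv']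
      _ = (s * t⁻¹)⁻¹ := (mul_inv_rev' _ _).symm
      _ = s * t⁻¹ := idem_inv h2
  set z := t * (s⁻¹ * s) with hz
  have hzt : nle z t := ⟨s⁻¹ * s, idem_dd s, rfl⟩
  have hzs : nle z s := by
    refine ⟨s⁻¹ * t, h1, ?_⟩
    calc t * (s⁻¹ * s) = t * s⁻¹ * s := (mul_assoc _ _ _).symm
      _ = s * t⁻¹ * s := by rw [hst]
      _ = s * (t⁻¹ * s) := mul_assoc _ _ _
      _ = s * (s⁻¹ * t) := by rw [hts]
  set dz := (t⁻¹ * t) * (s⁻¹ * s) with hdz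
  have hdzi : IsIdem dz := idem_mul (idem_dd t) (idem_dd s)
  have hdzz : z⁻¹ * z = dz := d_mul_idem (idem_dd s) t
  have htdz : t * dz = z := by
    calc t * ((t⁻¹ * t) * (s⁻¹ * s)) = t * (t⁻¹ * (t * (s⁻¹ * s))) := by
          simp only [mul_assoc]
      _ = t * (s⁻¹ * s) := mim_ap _ _
  obtain ⟨e', he', hee0, hjoin1⟩ := BooleanInverseMonoid.idem_compl dz hdzi
  set f := (t⁻¹ * t) * e' with hf
  have hfi : IsIdem f := idem_mul (idem_dd t) he'
  have hdist := BooleanInverseMonoid.idem_distrib (t⁻¹ * t) dz e' 1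
    (idem_dd t) hdzi he' hjoin1
  have hddz : (t⁻¹ * t) * dz = dz := by
    rw [hdz, ← mul_assoc, show (t⁻¹ * t) * (t⁻¹ * t) = t⁻¹ * t from idem_dd t]
  rw [hddz, mul_one, ← hf] at hdist
  set t' := t * f with ht'
  have hstdz : (s⁻¹ * t) * dz = s⁻¹ * t := by
    calc (s⁻¹ * t) * ((t⁻¹ * t) * (s⁻¹ * s))
        = s⁻¹ * (t * (t⁻¹ * (t * (s⁻¹ * s)))) := by simp only [mul_assoc]
      _ = s⁻¹ * (t * (s⁻¹ * s)) := by rw [mim_ap]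
      _ = (s⁻¹ * t) * (s⁻¹ * s) := (mul_assoc _ _ _).symm
      _ = (s⁻¹ * s) * (s⁻¹ * t) := idem_comm h1 (idem_dd s)
      _ = s⁻¹ * (s * (s⁻¹ * t)) := mul_assoc _ _ _
      _ = s⁻¹ * t := imi_ap s t
  have ho1 : s⁻¹ * t' = 0 := by
    calc s⁻¹ * (t * f) = s⁻¹ * (t * (t⁻¹ * (t * e'))) := by
          rw [hf]; simp only [mul_assoc]
      _ = s⁻¹ * (t * e') := by rw [mim_ap]
      _ = (s⁻¹ * t) * e' := (mul_assoc _ _ _).symm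
      _ = ((s⁻¹ * t) * dz) * e' := by rw [hstdz]
      _ = (s⁻¹ * t) * (dz * e') := mul_assoc _ _ _
      _ = 0 := by rw [hee0, BooleanInverseMonoid.mul_zero]
  have hsf : s * f = 0 := by
    have hss : s * f = s * (s⁻¹ * s) * f := by rw [mim']
    calc s * f = s * ((s⁻¹ * s) * ((t⁻¹ * t) * e')) := by
          rw [hss, hf]; simp only [mul_assoc]
      _ = s * (((s⁻¹ * s) * (t⁻¹ * t)) * e') := by simp only [mul_assoc]
      _ = s * (dz * e') := by rw [idem_comm (idem_dd s) (idem_dd t), ← hdz]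
      _ = 0 := by rw [hee0, BooleanInverseMonoid.mul_zero]
  have ho2 : s * t'⁻¹ = 0 := by
    calc s * (t * f)⁻¹ = s * (f * t⁻¹) := by rw [mul_inv_rev', idem_inv hfi]
      _ = (s * f) * t⁻¹ := (mul_assoc _ _ _).symm
      _ = 0 := by rw [hsf, BooleanInverseMonoid.zero_mul]
  obtain ⟨j, hj⟩ := BooleanInverseMonoid.orthogonal_join s t' ho1 ho2
  have ht't : nle t' t := ⟨f, hfi, rfl⟩
  have hztt : IsJoin z t' t := by
    refine ⟨hzt, ht't, ?_⟩
    intro u hu1 hu2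
    have e1 : u * dz = t * dz := by
      have h0 := nle_def hu1
      rw [hdzz] at h0
      rw [← h0, htdz]
    have e2 : u * f = t * f := by
      have hdt' : t'⁻¹ * t' = f := by
        rw [ht', d_mul_idem hfi t, hf, ← mul_assoc,
          show (t⁻¹ * t) * (t⁻¹ * t) = t⁻¹ * t from idem_dd t]
      have h0 := nle_def hu2
      rw [hdt'] at h0
      rw [← h0]
    have hres := restrict_eq hdzi hfi (idem_dd t) hdist e1 e2
    exact ⟨t⁻¹ * t, idem_dd t, by rw [hres, mim']⟩
  have hjst : IsJoin s t j := by
    obtain ⟨hsj, ht'j, hub⟩ := hj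
    refine ⟨hsj, hztt.2.2 j (nle_trans hzs hsj) ht'j, ?_⟩
    intro u hsu htu
    exact hub u hsu (nle_trans ht't htu)
  refine ⟨j, hjst, ?_⟩
  intro c hcs hct
  constructor
  · exact join_idem hcs.1 hct.1 (join_mul_left c⁻¹ hjst)
  · have hD := join_mul_left c (join_inv hjst)
    exact join_idem hcs.2 hct.2 hD

end BIMAux
theorem stmt6 {S : Type*} [BooleanInverseMonoid S] :
    (∀ s t : S, Compatible s t → ∃ j : S, IsJoin s t j) ∧
    (∀ A : Finset S, A.Nonempty → (∀ s ∈ A, ∀ t ∈ A, Compatible s t) →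
      ∃ j : S, (∀ s ∈ A, nle s j) ∧ ∀ u : S, (∀ s ∈ A, nle s u) → nle j u) := by
  constructor
  · intro s t hc
    obtain ⟨j, hj, -⟩ := BIMAux.compat_join hc
    exact ⟨j, hj⟩
  · have key : ∀ A : Finset S, A.Nonempty → (∀ s ∈ A, ∀ t ∈ A, Compatible s t) →
        ∃ j : S, (∀ s ∈ A, nle s j) ∧ (∀ u : S, (∀ s ∈ A, nle s u) → nle j u) ∧
          (∀ c : S, (∀ s ∈ A, Compatible c s) → Compatible c j) := by
      intro A hA
      induction hA using Finset.Nonempty.cons_induction with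
      | singleton a =>
          intro _
          refine ⟨a, ?_, ?_, ?_⟩
          · intro s hs
            rw [Finset.mem_singleton] at hs
            rw [hs]
            exact BIMAux.nle_refl a
          · intro u hu
            exact hu a (Finset.mem_singleton_self a)
          · intro c hc
            exact hc a (Finset.mem_singleton_self a)
      | cons a A ha hA ih =>
          intro hcomp
          obtain ⟨j', h1, h2, h3⟩ := ih (fun s hs t ht =>
            hcomp s (Finset.mem_cons_of_mem hs) t (Finset.mem_cons_of_mem ht))
          have hcaj : Compatible a j' :=
            h3 a (fun s hs => hcomp a (Finset.mem_cons_self a A) s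
              (Finset.mem_cons_of_mem hs))
          obtain ⟨j, hj, hjc⟩ := BIMAux.compat_join hcaj
          refine ⟨j, ?_, ?_, ?_⟩
          · intro s hs
            rcases Finset.mem_cons.mp hs with rfl | hs
            · exact hj.1
            · exact BIMAux.nle_trans (h1 s hs) hj.2.1
          · intro u hu
            exact hj.2.2 u (hu a (Finset.mem_cons_self a A))
              (h2 u fun s hs => hu s (Finset.mem_cons_of_mem hs))
          · intro c hc
            exact hjc c (hc a (Finset.mem_cons_self a A))
              (h3 c fun s hs => hc s (Finset.mem_cons_of_mem hs))
    intro A hA hcomp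
    obtain ⟨j, hub, hlub, -⟩ := key A hA hcomp
    exact ⟨j, hub, hlub⟩
end

section
/- In a boolean inverse monoid, every nonzero element belongs to an ultrafilter. -/
section Aux
variable {S : Type*} [BooleanInverseMonoid S]
open BooleanInverseMonoid

lemma aux_idem_mul {e f : S} (he : IsIdem e) (hf : IsIdem f) : IsIdem (e * f) := by
  have he' : e * e = e := he
  have hf' : f * f = f := hf
  have hb1 : (e * f) * (f * (e*f)⁻¹ * e) * (e * f) = e * f := by
    have h1 : (e*f) * (f*(e*f)⁻¹*e) * (e*f) = e * ((f*f) * ((e*f)⁻¹ * ((e*e) * f))) := by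
      simp only [mul_assoc]
    rw [h1, hf', he']
    have h2 : e * (f * ((e*f)⁻¹ * (e * f))) = (e*f) * (e*f)⁻¹ * (e*f) := by
      simp only [mul_assoc]
    rw [h2, mul_inv_mul]
  have hb2 : (f * (e*f)⁻¹ * e) * (e * f) * (f * (e*f)⁻¹ * e) = f * (e*f)⁻¹ * e := by
    have h1 : (f*(e*f)⁻¹*e) * (e*f) * (f*(e*f)⁻¹*e)
        = f * ((e*f)⁻¹ * ((e*e) * ((f*f) * ((e*f)⁻¹ * e)))) := by
      simp only [mul_assoc]
    rw [h1, he', hf']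
    have h2 : f * ((e*f)⁻¹ * (e * (f * ((e*f)⁻¹ * e))))
        = f * (((e*f)⁻¹ * (e*f) * (e*f)⁻¹) * e) := by
      simp only [mul_assoc]
    rw [h2, inv_mul_inv, mul_assoc]
  have hbinv : f * (e*f)⁻¹ * e = (e*f)⁻¹ := inv_unique (e*f) _ hb1 hb2
  have hbidem : (e*f)⁻¹ * (e*f)⁻¹ = (e*f)⁻¹ := by
    conv_lhs => rw [← hbinv]
    have h1 : (f*(e*f)⁻¹*e)*(f*(e*f)⁻¹*e)
        = f * (((e*f)⁻¹ * (e*f) * (e*f)⁻¹) * e) := by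
      simp only [mul_assoc]
    rw [h1, inv_mul_inv, ← mul_assoc, hbinv]
  have hii : (e*f)⁻¹⁻¹ = e*f :=
    (inv_unique (e*f)⁻¹ (e*f) (inv_mul_inv (e*f)) (mul_inv_mul (e*f))).symm
  have hinv : (e*f)⁻¹⁻¹ = (e*f)⁻¹ :=
    (inv_unique (e*f)⁻¹ (e*f)⁻¹ (by rw [hbidem, hbidem]) (by rw [hbidem, hbidem])).symm
  have key : e * f = (e*f)⁻¹ := hii.symm.trans hinv
  show (e*f) * (e*f) = e*f
  rw [key]
  exact hbidem

lemma aux_nle_refl (s : S) : nle s s :=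
  ⟨s⁻¹ * s, by unfold IsIdem; rw [mul_assoc, ← mul_assoc s s⁻¹ s,
      BooleanInverseMonoid.mul_inv_mul],
    by rw [← mul_assoc, BooleanInverseMonoid.mul_inv_mul]⟩

lemma aux_nle_trans {s t u : S} (h1 : nle s t) (h2 : nle t u) : nle s u := by
  obtain ⟨e, he, hse⟩ := h1
  obtain ⟨f, hf, htf⟩ := h2
  exact ⟨f * e, aux_idem_mul hf he, by rw [hse, htf, mul_assoc]⟩

lemma aux_nle_zero {s : S} (h : nle s 0) : s = 0 := by
  obtain ⟨e, _, hse⟩ := h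
  rw [hse, BooleanInverseMonoid.zero_mul]

end Aux

theorem stmt8 {S : Type*} [BooleanInverseMonoid S] (s : S) (hs : s ≠ 0) :
    ∃ F : Set S, IsUltrafilter' F ∧ s ∈ F := by
  set P : Set (Set S) := {F | IsProperFilter F ∧ s ∈ F} with hP
  have hF0 : {t | nle s t} ∈ P := by
    refine ⟨⟨⟨⟨s, aux_nle_refl s⟩, ?_, ?_⟩, ?_⟩, aux_nle_refl s⟩
    · intro a b ha hab; exact aux_nle_trans ha hab
    · intro a b ha hb; exact ⟨s, aux_nle_refl s, ha, hb⟩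
    · intro h0; exact hs (aux_nle_zero h0)
  have hchain : ∀ c ⊆ P, IsChain (· ⊆ ·) c → c.Nonempty →
      ∃ ub ∈ P, ∀ F ∈ c, F ⊆ ub := by
    intro c hcP hchain ⟨F₁, hF₁⟩
    refine ⟨⋃₀ c, ⟨⟨⟨⟨s, F₁, hF₁, (hcP hF₁).2⟩, ?_, ?_⟩, ?_⟩,
      ⟨F₁, hF₁, (hcP hF₁).2⟩⟩, fun F hF => Set.subset_sUnion_of_mem hF⟩
    · rintro a b ⟨F, hF, haF⟩ hab
      exact ⟨F, hF, (hcP hF).1.1.2.1 a b haF hab⟩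
    · rintro a b ⟨F, hF, haF⟩ ⟨G, hG, hbG⟩
      rcases hchain.total hF hG with h | h
      · obtain ⟨u, hu, h1, h2⟩ := (hcP hG).1.1.2.2 a b (h haF) hbG
        exact ⟨u, ⟨G, hG, hu⟩, h1, h2⟩
      · obtain ⟨u, hu, h1, h2⟩ := (hcP hF).1.1.2.2 a b haF (h hbG)
        exact ⟨u, ⟨F, hF, hu⟩, h1, h2⟩
    · rintro ⟨F, hF, h0⟩; exact (hcP hF).1.2 h0
  obtain ⟨M, _, hM⟩ := zorn_subset_nonempty P hchain _ hF0
  refine ⟨M, ⟨hM.prop.1, ?_⟩, hM.prop.2⟩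
  intro G hG hMG
  have hGP : G ∈ P := ⟨hG, hMG hM.prop.2⟩
  exact Set.Subset.antisymm (hM.2 hGP hMG) hMG
end

section
/- Let S be a boolean inverse monoid and F a filter in S. The following are equivalent: (1) F is an ultrafilter in S; (2) H = (F⁻¹F)↑ is an idempotent filter that is an ultrafilter in S; (3) the set of idempotents E(H) of H is an ultrafilter in the boolean algebra E(S). -/
/-- A filter in the boolean algebra of idempotents `E(S)`. -/
def IsIdemFilter {S : Type*} [Mul S] (U : Set S) : Prop :=
  (∀ e ∈ U, IsIdem e) ∧ U.Nonempty ∧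
    (∀ e f : S, e ∈ U → IsIdem f → nle e f → f ∈ U) ∧
    (∀ e f : S, e ∈ U → f ∈ U → ∃ g ∈ U, nle g e ∧ nle g f)

/-- An ultrafilter in the boolean algebra of idempotents `E(S)`. -/
def IsIdemUltrafilter {S : Type*} [Mul S] [Zero S] (U : Set S) : Prop :=
  IsIdemFilter U ∧ (0 : S) ∉ U ∧
    ∀ V : Set S, IsIdemFilter V → (0 : S) ∉ V → U ⊆ V → V = U
namespace BIMaux
variable {S : Type*} [BooleanInverseMonoid S]

lemma mim (a : S) : a * a⁻¹ * a = a := BooleanInverseMonoid.mul_inv_mul a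
lemma imi (a : S) : a⁻¹ * a * a⁻¹ = a⁻¹ := BooleanInverseMonoid.inv_mul_inv a
lemma inv_uniq {a b : S} (h1 : a * b * a = a) (h2 : b * a * b = b) : b = a⁻¹ :=
  BooleanInverseMonoid.inv_unique a b h1 h2
lemma zmul (a : S) : (0:S) * a = 0 := BooleanInverseMonoid.zero_mul a
lemma mulz (a : S) : a * (0:S) = 0 := BooleanInverseMonoid.mul_zero a

lemma idem_inv {e : S} (he : IsIdem e) : e⁻¹ = e :=
  (inv_uniq (by rw [he, he]) (by rw [he, he])).symm

lemma inv_invol (a : S) : a⁻¹⁻¹ = a := (inv_uniq (imi a) (mim a)).symm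

lemma idem_inv_mul (a : S) : IsIdem (a⁻¹ * a) := by
  show a⁻¹ * a * (a⁻¹ * a) = a⁻¹ * a
  calc a⁻¹ * a * (a⁻¹ * a) = a⁻¹ * (a * a⁻¹ * a) := by simp only [mul_assoc]
    _ = a⁻¹ * a := by rw [mim]

lemma idem_mul_inv (a : S) : IsIdem (a * a⁻¹) := by
  show a * a⁻¹ * (a * a⁻¹) = a * a⁻¹
  calc a * a⁻¹ * (a * a⁻¹) = a * (a⁻¹ * a * a⁻¹) := by simp only [mul_assoc]
    _ = a * a⁻¹ := by rw [imi]

lemma idem_dup {e : S} (he : IsIdem e) (y : S) : e * (e * y) = e * y := by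
  rw [← mul_assoc, he]

lemma idem_mul_idem {e f : S} (he : IsIdem e) (hf : IsIdem f) : IsIdem (e * f) := by
  set x := (e*f)⁻¹ with hxdef
  have h1 : (e*f) * x * (e*f) = e*f := mim _
  have h2 : x * (e*f) * x = x := imi _
  have hx : f * x * e = x := by
    apply inv_uniq
    · calc e * f * (f * x * e) * (e * f)
          = e * (f * (f * (x * (e * (e * f))))) := by simp only [mul_assoc]
        _ = e * (f * (x * (e * f))) := by rw [idem_dup hf, idem_dup he]
        _ = e * f * x * (e * f) := by simp only [mul_assoc]
        _ = e * f := h1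
    · calc f * x * e * (e * f) * (f * x * e)
          = f * (x * (e * (e * (f * (f * (x * e)))))) := by simp only [mul_assoc]
        _ = f * (x * (e * (f * (x * e)))) := by rw [idem_dup hf, idem_dup he]
        _ = f * (x * (e * f) * x) * e := by simp only [mul_assoc]
        _ = f * x * e := by rw [h2]
  have key : (f * x * e) * (f * x * e) = f * x * e := by
    calc f * x * e * (f * x * e)
        = f * (x * (e * f) * x) * e := by simp only [mul_assoc]
      _ = f * x * e := by rw [h2]
  have hxi : IsIdem x := by
    show x * x = x
    rw [← hx]; exact key
  have hq : e * f = x⁻¹ := by rw [hxdef, inv_invol]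
  rw [show IsIdem (e*f) ↔ IsIdem x from by rw [hq, idem_inv hxi]]
  exact hxi

lemma idem_comm {e f : S} (he : IsIdem e) (hf : IsIdem f) : e * f = f * e := by
  have hef := idem_mul_idem he hf
  have hfe := idem_mul_idem hf he
  have hef' : e * f * (e * f) = e * f := hef
  have hfe' : f * e * (f * e) = f * e := hfe
  have key : f * e = (e * f)⁻¹ := by
    apply inv_uniq
    · calc e * f * (f * e) * (e * f)
          = e * (f * (f * (e * (e * f)))) := by simp only [mul_assoc]
        _ = e * (f * (e * f)) := by rw [idem_dup hf, idem_dup he]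
        _ = e * f := by simpa only [mul_assoc] using hef'
    · calc f * e * (e * f) * (f * e)
          = f * (e * (e * (f * (f * e)))) := by simp only [mul_assoc]
        _ = f * (e * (f * e)) := by rw [idem_dup he, idem_dup hf]
        _ = f * e := by simpa only [mul_assoc] using hfe'
  rw [key, idem_inv hef]

lemma mul_inv_rev' (a b : S) : (a * b)⁻¹ = b⁻¹ * a⁻¹ := by
  symm; apply inv_uniq
  · calc a * b * (b⁻¹ * a⁻¹) * (a * b)
        = a * (b * b⁻¹ * (a⁻¹ * a)) * b := by simp only [mul_assoc]
      _ = a * (a⁻¹ * a * (b * b⁻¹)) * b := by rw [idem_comm (idem_mul_inv b) (idem_inv_mul a)]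
      _ = a * a⁻¹ * a * (b * b⁻¹ * b) := by simp only [mul_assoc]
      _ = a * b := by rw [mim, mim]
  · calc b⁻¹ * a⁻¹ * (a * b) * (b⁻¹ * a⁻¹)
        = b⁻¹ * (a⁻¹ * a * (b * b⁻¹)) * a⁻¹ := by simp only [mul_assoc]
      _ = b⁻¹ * (b * b⁻¹ * (a⁻¹ * a)) * a⁻¹ := by rw [idem_comm (idem_inv_mul a) (idem_mul_inv b)]
      _ = b⁻¹ * b * b⁻¹ * (a⁻¹ * a * a⁻¹) := by simp only [mul_assoc]
      _ = b⁻¹ * a⁻¹ := by rw [imi, imi]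

end BIMaux
namespace BIMaux
variable {S : Type*} [BooleanInverseMonoid S]

lemma nle_refl (s : S) : nle s s := ⟨s⁻¹ * s, idem_inv_mul s, by rw [← mul_assoc, mim]⟩

lemma nle_trans {s t u : S} (h1 : nle s t) (h2 : nle t u) : nle s u := by
  obtain ⟨e, he, hse⟩ := h1
  obtain ⟨f, hf, htf⟩ := h2
  exact ⟨f * e, idem_mul_idem hf he, by rw [hse, htf, mul_assoc]⟩

lemma nle_of_left {f s t : S} (hf : IsIdem f) (h : s = f * t) : nle s t := by
  refine ⟨t⁻¹ * f * t, ?_, ?_⟩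
  · show t⁻¹ * f * t * (t⁻¹ * f * t) = t⁻¹ * f * t
    have hcomm : f * (t * t⁻¹) = t * t⁻¹ * f := idem_comm hf (idem_mul_inv t)
    calc t⁻¹ * f * t * (t⁻¹ * f * t)
        = t⁻¹ * (f * (t * t⁻¹)) * (f * t) := by simp only [mul_assoc]
      _ = t⁻¹ * (t * t⁻¹ * f) * (f * t) := by rw [hcomm]
      _ = t⁻¹ * t * t⁻¹ * (f * (f * t)) := by simp only [mul_assoc]
      _ = t⁻¹ * f * t := by rw [imi, idem_dup hf, ← mul_assoc]
  · calc s = f * t := h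
      _ = f * (t * t⁻¹ * t) := by rw [mim]
      _ = f * (t * t⁻¹) * t := by simp only [mul_assoc]
      _ = t * t⁻¹ * f * t := by rw [idem_comm hf (idem_mul_inv t)]
      _ = t * (t⁻¹ * f * t) := by simp only [mul_assoc]

lemma nle_mul_left {s t : S} (u : S) (h : nle s t) : nle (u * s) (u * t) := by
  obtain ⟨e, he, hse⟩ := h
  exact ⟨e, he, by rw [hse, mul_assoc]⟩

lemma nle_mul_right {s t : S} (u : S) (h : nle s t) : nle (s * u) (t * u) := by
  obtain ⟨e, he, hse⟩ := h
  refine ⟨u⁻¹ * e * u, ?_, ?_⟩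
  · show u⁻¹ * e * u * (u⁻¹ * e * u) = u⁻¹ * e * u
    have hcomm : e * (u * u⁻¹) = u * u⁻¹ * e := idem_comm he (idem_mul_inv u)
    calc u⁻¹ * e * u * (u⁻¹ * e * u)
        = u⁻¹ * (e * (u * u⁻¹)) * (e * u) := by simp only [mul_assoc]
      _ = u⁻¹ * (u * u⁻¹ * e) * (e * u) := by rw [hcomm]
      _ = u⁻¹ * u * u⁻¹ * (e * (e * u)) := by simp only [mul_assoc]
      _ = u⁻¹ * e * u := by rw [imi, idem_dup he, ← mul_assoc]
  · calc s * u = t * e * u := by rw [hse]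
      _ = t * (e * (u * u⁻¹ * u)) := by rw [mim]; simp only [mul_assoc]
      _ = t * (e * (u * u⁻¹) * u) := by simp only [mul_assoc]
      _ = t * (u * u⁻¹ * e * u) := by rw [idem_comm he (idem_mul_inv u)]
      _ = t * u * (u⁻¹ * e * u) := by simp only [mul_assoc]

lemma nle_inv {s t : S} (h : nle s t) : nle s⁻¹ t⁻¹ := by
  obtain ⟨e, he, hse⟩ := h
  exact nle_of_left he (by rw [hse, mul_inv_rev', idem_inv he])

lemma nle_idem {s e : S} (he : IsIdem e) (h : nle s e) : IsIdem s := by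
  obtain ⟨f, hf, hsf⟩ := h
  rw [hsf]; exact idem_mul_idem he hf

lemma nle_zero {s : S} (h : nle s 0) : s = 0 := by
  obtain ⟨e, he, hse⟩ := h; rw [hse, zmul]

lemma idem_mul_nle_left {e f : S} (hf : IsIdem f) : nle (e * f) e :=
  ⟨f, hf, rfl⟩

lemma idem_mul_nle_right {e f : S} (he : IsIdem e) : nle (e * f) f :=
  nle_of_left he rfl

lemma nle_absorb_left {u a : S} (h : nle u a) : a * (a⁻¹ * u) = u := by
  obtain ⟨e, he, hue⟩ := h
  calc a * (a⁻¹ * u) = a * a⁻¹ * (a * e) := by rw [hue]; simp only [mul_assoc]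
    _ = a * a⁻¹ * a * e := by simp only [mul_assoc]
    _ = a * e := by rw [mim]
    _ = u := hue.symm

lemma nle_absorb_right {u a : S} (h : nle u a) : u * (a⁻¹ * a) = u := by
  obtain ⟨e, he, hue⟩ := h
  calc u * (a⁻¹ * a) = a * (e * (a⁻¹ * a)) := by rw [hue]; simp only [mul_assoc]
    _ = a * (a⁻¹ * a * e) := by rw [idem_comm he (idem_inv_mul a)]
    _ = a * a⁻¹ * a * e := by simp only [mul_assoc]
    _ = u := by rw [mim, ← hue]

lemma idem_absorb {k e : S} (he : IsIdem e) (h : nle k e) : e * k = k := by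
  obtain ⟨f, hf, hkf⟩ := h
  rw [hkf, ← mul_assoc, he]

lemma inv_mul_nle {u a b : S} (h1 : nle u a) (h2 : nle u b) : nle (u⁻¹ * u) (a⁻¹ * b) :=
  nle_trans (nle_mul_right u (nle_inv h1)) (nle_mul_left a⁻¹ h2)

end BIMaux
namespace BIMaux
open Pointwise
variable {S : Type*} [BooleanInverseMonoid S]

lemma idem_zero : IsIdem (0:S) := mulz 0

lemma mem_invmul {F : Set S} {x : S} : x ∈ F⁻¹ * F ↔ ∃ a ∈ F, ∃ b ∈ F, a⁻¹ * b = x := by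
  constructor
  · rintro ⟨u, hu, v, hv, rfl⟩
    exact ⟨u⁻¹, hu, v, hv, by rw [inv_invol]⟩
  · rintro ⟨a, ha, b, hb, rfl⟩
    have : a⁻¹ ∈ F⁻¹ := Set.mem_inv.mpr (by rw [inv_invol]; exact ha)
    exact Set.mul_mem_mul this hb

lemma dinvd_mem {F : Set S} {a : S} (ha : a ∈ F) : a⁻¹ * a ∈ upClosure (F⁻¹ * F) :=
  ⟨a⁻¹ * a, mem_invmul.mpr ⟨a, ha, a, ha, rfl⟩, nle_refl _⟩

lemma dd3 {F : Set S} (hF : IsFilter' F) {a b c : S} (ha : a ∈ F) (hb : b ∈ F) (hc : c ∈ F) :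
    ∃ u ∈ F, nle u a ∧ nle u b ∧ nle u c := by
  obtain ⟨u1, h1, h1a, h1b⟩ := hF.2.2 a b ha hb
  obtain ⟨u, hu, hu1, huc⟩ := hF.2.2 u1 c h1 hc
  exact ⟨u, hu, nle_trans hu1 h1a, nle_trans hu1 h1b, huc⟩

lemma mem_H {F : Set S} (hF : IsFilter' F) {x : S} :
    x ∈ upClosure (F⁻¹ * F) ↔ ∃ a ∈ F, nle (a⁻¹ * a) x := by
  constructor
  · rintro ⟨p, hp, hpx⟩
    obtain ⟨b, hb, c, hc, rfl⟩ := mem_invmul.mp hp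
    obtain ⟨u, hu, hub, huc⟩ := hF.2.2 b c hb hc
    exact ⟨u, hu, nle_trans (inv_mul_nle hub huc) hpx⟩
  · rintro ⟨a, ha, hax⟩
    exact ⟨a⁻¹ * a, mem_invmul.mpr ⟨a, ha, a, ha, rfl⟩, hax⟩

lemma H_filter {F : Set S} (hF : IsFilter' F) : IsFilter' (upClosure (F⁻¹ * F)) := by
  obtain ⟨a, ha⟩ := hF.1
  refine ⟨⟨a⁻¹ * a, dinvd_mem ha⟩, ?_, ?_⟩
  · rintro s t ⟨p, hp, hps⟩ hst
    exact ⟨p, hp, nle_trans hps hst⟩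
  · intro x y hx hy
    obtain ⟨b, hb, hbx⟩ := (mem_H hF).mp hx
    obtain ⟨c, hc, hcy⟩ := (mem_H hF).mp hy
    obtain ⟨u, hu, hub, huc⟩ := hF.2.2 b c hb hc
    exact ⟨u⁻¹ * u, dinvd_mem hu,
      nle_trans (inv_mul_nle hub hub) hbx, nle_trans (inv_mul_nle huc huc) hcy⟩

lemma H_zero {F : Set S} (hF : IsFilter' F) :
    (0:S) ∈ upClosure (F⁻¹ * F) ↔ (0:S) ∈ F := by
  constructor
  · rintro ⟨p, hp, hp0⟩
    obtain ⟨b, hb, c, hc, hbc⟩ := mem_invmul.mp hp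
    obtain ⟨u, hu, hub, huc⟩ := hF.2.2 b c hb hc
    have h1 : nle (u⁻¹ * u) (0:S) := by
      rw [← nle_zero hp0, ← hbc]; exact inv_mul_nle hub huc
    have h2 : u⁻¹ * u = 0 := nle_zero h1
    have h3 : u = 0 := by
      have := mim u
      rw [mul_assoc, h2, mulz] at this
      exact this.symm
    rwa [h3] at hu
  · intro h0
    exact ⟨0, mem_invmul.mpr ⟨0, h0, 0, h0, by rw [idem_inv idem_zero, zmul]⟩, nle_refl _⟩

lemma above_idem {G : Set S} (hG : IsFilter' G) {e g : S} (heG : e ∈ G) (hei : IsIdem e)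
    (hg : g ∈ G) : ∃ k ∈ G, IsIdem k ∧ nle k g := by
  obtain ⟨k, hk, hke, hkg⟩ := hG.2.2 e g heG hg
  exact ⟨k, hk, nle_idem hei hke, hkg⟩

lemma ult12 {F : Set S} (hF : IsFilter' F) (h : IsUltrafilter' F) :
    IsUltrafilter' (upClosure (F⁻¹ * F)) := by
  obtain ⟨a, ha⟩ := hF.1
  refine ⟨⟨H_filter hF, fun h0 => h.1.2 ((H_zero hF).mp h0)⟩, ?_⟩
  intro G hG hHG
  set G' : Set S := {x | ∃ g ∈ G, nle (a * g) x} with hG'def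
  have hG'filter : IsFilter' G' := by
    refine ⟨?_, ?_, ?_⟩
    · obtain ⟨g0, hg0⟩ := hG.1.1
      exact ⟨a * g0, g0, hg0, nle_refl _⟩
    · rintro s t ⟨g, hg, hgs⟩ hst
      exact ⟨g, hg, nle_trans hgs hst⟩
    · rintro x y ⟨g, hg, hgx⟩ ⟨g', hg', hg'y⟩
      obtain ⟨k, hk, hkg, hkg'⟩ := hG.1.2.2 g g' hg hg'
      exact ⟨a * k, ⟨k, hk, nle_refl _⟩,
        nle_trans (nle_mul_left a hkg) hgx, nle_trans (nle_mul_left a hkg') hg'y⟩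
  have hda : a⁻¹ * a ∈ G := hHG (dinvd_mem ha)
  have hG'proper : (0:S) ∉ G' := by
    rintro ⟨g, hg, hg0⟩
    have hag : a * g = 0 := nle_zero hg0
    obtain ⟨k, hk, hkg, hkd⟩ := hG.1.2.2 g (a⁻¹ * a) hg hda
    have hak : a * k = 0 := nle_zero (hag ▸ nle_mul_left a hkg)
    have hk0 : k = 0 := by
      have h1 : (a⁻¹ * a) * k = k := idem_absorb (idem_inv_mul a) hkd
      rw [mul_assoc, hak, mulz] at h1
      exact h1.symm
    exact hG.2 (hk0 ▸ hk)
  have hFG' : F ⊆ G' := by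
    intro x hx
    obtain ⟨u, hu, hua, hux⟩ := hF.2.2 a x ha hx
    refine ⟨a⁻¹ * u, hHG ⟨a⁻¹ * u, mem_invmul.mpr ⟨a, ha, u, hu, rfl⟩, nle_refl _⟩, ?_⟩
    rw [nle_absorb_left hua]; exact hux
  have hG'F : G' = F := h.2 G' ⟨hG'filter, hG'proper⟩ hFG'
  refine subset_antisymm ?_ hHG
  intro g hg
  obtain ⟨k, hk, hkd, hkg⟩ := hG.1.2.2 (a⁻¹ * a) g hda hg
  have hki : IsIdem k := nle_idem (idem_inv_mul a) hkd
  have hakF : a * k ∈ F := hG'F ▸ (⟨k, hk, nle_refl _⟩ : a * k ∈ G')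
  have hmem : (a * k)⁻¹ * (a * k) ∈ F⁻¹ * F :=
    mem_invmul.mpr ⟨a * k, hakF, a * k, hakF, rfl⟩
  have heq : (a * k)⁻¹ * (a * k) = k * ((a⁻¹ * a) * k) := by
    rw [mul_inv_rev', idem_inv hki]; simp only [mul_assoc]
  have hle : nle ((a * k)⁻¹ * (a * k)) k :=
    ⟨(a⁻¹ * a) * k, idem_mul_idem (idem_inv_mul a) hki, heq⟩
  exact ⟨(a * k)⁻¹ * (a * k), hmem, nle_trans hle hkg⟩

end BIMaux
namespace BIMaux
open Pointwise
variable {S : Type*} [BooleanInverseMonoid S]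

lemma ult21 {F : Set S} (hF : IsFilter' F)
    (h : IsUltrafilter' (upClosure (F⁻¹ * F))) : IsUltrafilter' F := by
  refine ⟨⟨hF, fun h0 => h.1.2 ((H_zero hF).mpr h0)⟩, ?_⟩
  intro G hG hFG
  have hsub : upClosure (F⁻¹ * F) ⊆ upClosure (G⁻¹ * G) := by
    rintro x ⟨p, hp, hpx⟩
    obtain ⟨b, hb, c, hc, rfl⟩ := mem_invmul.mp hp
    exact ⟨b⁻¹ * c, mem_invmul.mpr ⟨b, hFG hb, c, hFG hc, rfl⟩, hpx⟩
  have hHG : upClosure (G⁻¹ * G) = upClosure (F⁻¹ * F) :=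
    h.2 _ ⟨H_filter hG.1, fun h0 => hG.2 ((H_zero hG.1).mp h0)⟩ hsub
  refine subset_antisymm ?_ hFG
  intro g hg
  obtain ⟨a, ha⟩ := hF.1
  obtain ⟨u, hu, hua, hug⟩ := hG.1.2.2 a g (hFG ha) hg
  have hmem : a⁻¹ * u ∈ upClosure (F⁻¹ * F) := by
    rw [← hHG]
    exact ⟨a⁻¹ * u, mem_invmul.mpr ⟨a, hFG ha, u, hu, rfl⟩, nle_refl _⟩
  obtain ⟨p, hp, hpau⟩ := hmem
  obtain ⟨b, hb, c, hc, rfl⟩ := mem_invmul.mp hp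
  obtain ⟨d, hd, hda, hdb, hdc⟩ := dd3 hF ha hb hc
  have hd1 : nle (d * (d⁻¹ * d)) (a * (b⁻¹ * c)) :=
    nle_trans (nle_mul_right (d⁻¹ * d) hda) (nle_mul_left a (inv_mul_nle hdb hdc))
  have hd2 : d * (d⁻¹ * d) = d := by rw [← mul_assoc, mim]
  have habcF : a * (b⁻¹ * c) ∈ F := hF.2.1 d _ hd (hd2 ▸ hd1)
  have huF : u ∈ F := by
    have : nle (a * (b⁻¹ * c)) u := by
      rw [← nle_absorb_left hua]
      exact nle_mul_left a hpau
    exact hF.2.1 _ u habcF this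
  exact hF.2.1 u g huF hug

lemma ult23 {F : Set S} (hF : IsFilter' F)
    (h : IsUltrafilter' (upClosure (F⁻¹ * F))) :
    IsIdemUltrafilter {e ∈ upClosure (F⁻¹ * F) | IsIdem e} := by
  obtain ⟨a, ha⟩ := hF.1
  have hHf := H_filter hF
  refine ⟨⟨fun e he => he.2, ⟨a⁻¹ * a, dinvd_mem ha, idem_inv_mul a⟩, ?_, ?_⟩, ?_, ?_⟩
  · intro e f he hf hef
    exact ⟨hHf.2.1 e f he.1 hef, hf⟩
  · intro e f he hf
    obtain ⟨u, hu, hue, huf⟩ := hHf.2.2 e f he.1 hf.1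
    exact ⟨u, ⟨hu, nle_idem he.2 hue⟩, hue, huf⟩
  · exact fun h0 => h.1.2 h0.1
  · intro V hV hV0 hEV
    set W : Set S := {s | ∃ v ∈ V, nle v s} with hWdef
    have hWfilter : IsFilter' W := by
      refine ⟨?_, ?_, ?_⟩
      · obtain ⟨v, hv⟩ := hV.2.1
        exact ⟨v, v, hv, nle_refl _⟩
      · rintro s t ⟨v, hv, hvs⟩ hst
        exact ⟨v, hv, nle_trans hvs hst⟩
      · rintro x y ⟨v, hv, hvx⟩ ⟨w, hw, hwy⟩
        obtain ⟨g, hg, hgv, hgw⟩ := hV.2.2.2 v w hv hw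
        exact ⟨g, ⟨g, hg, nle_refl _⟩, nle_trans hgv hvx, nle_trans hgw hwy⟩
    have hWproper : (0:S) ∉ W := by
      rintro ⟨v, hv, hv0⟩
      exact hV0 (nle_zero hv0 ▸ hv)
    have hHW : upClosure (F⁻¹ * F) ⊆ W := by
      intro x hx
      obtain ⟨b, hb, hbx⟩ := (mem_H hF).mp hx
      exact ⟨b⁻¹ * b, hEV ⟨dinvd_mem hb, idem_inv_mul b⟩, hbx⟩
    have hWH : W = upClosure (F⁻¹ * F) := h.2 W ⟨hWfilter, hWproper⟩ hHW
    refine subset_antisymm ?_ hEV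
    intro v hv
    have hvH : v ∈ upClosure (F⁻¹ * F) := hWH ▸ (⟨v, hv, nle_refl _⟩ : v ∈ W)
    exact ⟨hvH, hV.1 v hv⟩

lemma ult32 {F : Set S} (hF : IsFilter' F)
    (h : IsIdemUltrafilter {e ∈ upClosure (F⁻¹ * F) | IsIdem e}) :
    IsUltrafilter' (upClosure (F⁻¹ * F)) := by
  obtain ⟨a, ha⟩ := hF.1
  refine ⟨⟨H_filter hF, fun h0 => h.2.1 ⟨h0, idem_zero⟩⟩, ?_⟩
  intro G hG hHG
  have he0G : a⁻¹ * a ∈ G := hHG (dinvd_mem ha)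
  set EG : Set S := {e ∈ G | IsIdem e} with hEGdef
  have hEGfilter : IsIdemFilter EG := by
    refine ⟨fun e he => he.2, ⟨a⁻¹ * a, he0G, idem_inv_mul a⟩, ?_, ?_⟩
    · intro e f he hf hef
      exact ⟨hG.1.2.1 e f he.1 hef, hf⟩
    · intro e f he hf
      obtain ⟨u, hu, hue, huf⟩ := hG.1.2.2 e f he.1 hf.1
      exact ⟨u, ⟨hu, nle_idem he.2 hue⟩, hue, huf⟩
  have hEG0 : (0:S) ∉ EG := fun h0 => hG.2 h0.1
  have hsub : {e ∈ upClosure (F⁻¹ * F) | IsIdem e} ⊆ EG := fun e he => ⟨hHG he.1, he.2⟩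
  have hEGE : EG = {e ∈ upClosure (F⁻¹ * F) | IsIdem e} := h.2.2 EG hEGfilter hEG0 hsub
  refine subset_antisymm ?_ hHG
  intro g hg
  obtain ⟨k, hk, hki, hkg⟩ := above_idem hG.1 he0G (idem_inv_mul a) hg
  have hkE : k ∈ {e ∈ upClosure (F⁻¹ * F) | IsIdem e} := hEGE ▸ (⟨hk, hki⟩ : k ∈ EG)
  exact (H_filter hF).2.1 k g hkE.1 hkg

end BIMaux
open Pointwise in
theorem stmt15 {S : Type*} [BooleanInverseMonoid S] (F : Set S) (hF : IsFilter' F) :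
    (IsUltrafilter' F ↔
      ((∃ e ∈ upClosure (F⁻¹ * F), IsIdem e) ∧ IsUltrafilter' (upClosure (F⁻¹ * F)))) ∧
    (IsUltrafilter' F ↔
      IsIdemUltrafilter {e ∈ upClosure (F⁻¹ * F) | IsIdem e}) := by
  obtain ⟨a, ha⟩ := hF.1
  constructor
  · constructor
    · intro h
      exact ⟨⟨a⁻¹ * a, BIMaux.dinvd_mem ha, BIMaux.idem_inv_mul a⟩, BIMaux.ult12 hF h⟩
    · intro h
      exact BIMaux.ult21 hF h.2
  · constructor
    · intro h
      exact BIMaux.ult23 hF (BIMaux.ult12 hF h)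
    · intro h
      exact BIMaux.ult21 hF (BIMaux.ult32 hF h)
end
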